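/- Let (Ḡ, j, p) be a central extension of a group G by ℝ, s_x a section of p (with s_x(1)=1) with homogeneous associated cochain φ and bounded defect c_x, (Ψ, f) an abstract kernel for Π and G, and Ψ̄(α)(ḡ) := s_x(Ψ(α)(p(ḡ)))·j(φ(ḡ)). Then for all α ∈ Π and ḡ, h̄ ∈ Ḡ: Ψ̄(α)(ḡ)·Ψ̄(α)(h̄) = Ψ̄(α)(ḡ·h̄)·j( c_x(Ψ(α)(p(ḡ)), Ψ(α)(p(h̄))) − c_x(p(ḡ), p(h̄)) ). Consequently, Ψ̄(α) is a group automorphism of Ḡ if and only if c_x(Ψ(α)(g), Ψ(α)(h)) = c_x(g,h) for all g, h ∈ G. -/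

import Mathlib

/-!
Every element of `Ḡ` is uniquely `s_x(g) · j(t)`, with `g = p(ḡ)` and `t = φ(ḡ)`, and since
`j(ℝ)` is central these normal forms multiply as
`(s_x(g) j(t)) (s_x(h) j(u)) = s_x(gh) j(c_x(g,h) + t + u)`, so `φ(ḡh̄) = c_x(p ḡ, p h̄) + φ ḡ + φ h̄`.
`Ψ̄(α)` applies `Ψ(α)` to the `G`-coordinate and keeps the `ℝ`-coordinate; it is therefore
bijective, and comparing the two normal forms of `Ψ̄(α)(ḡ) Ψ̄(α)(h̄)` gives the defect formula.
-/

section CentralExtension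

variable {G Gb : Type*} [Group G] [Group Gb] {j : ℝ → Gb} {p : Gb →* G} {sx : G → Gb}
  {φ : Gb → ℝ} {cx : G → G → ℝ}

theorem map_zero_eq_one_of_map_add (hj_hom : ∀ t u : ℝ, j (t + u) = j t * j u) : j 0 = 1 :=
  mul_eq_left.mp ((hj_hom 0 0).symm.trans (by rw [add_zero]))

theorem section_mul_section (hj_hom : ∀ t u : ℝ, j (t + u) = j t * j u)
    (hj_cent : ∀ t : ℝ, j t ∈ Subgroup.center Gb)
    (hcx : ∀ g h : G, j (cx g h) = sx g * sx h * (sx (g * h))⁻¹) (g h : G) (t u : ℝ) :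
    (sx g * j t) * (sx h * j u) = sx (g * h) * j (cx g h + t + u) := by
  have comm : ∀ (t : ℝ) (a : Gb), a * j t = j t * a := fun t a =>
    Subgroup.mem_center_iff.mp (hj_cent t) a
  have hgh : sx g * sx h = sx (g * h) * j (cx g h) := by
    rw [comm, hcx, inv_mul_cancel_right]
  calc (sx g * j t) * (sx h * j u)
      = (sx g * sx h) * (j t * j u) := by
        rw [mul_assoc, ← mul_assoc (j t), ← comm, mul_assoc, ← mul_assoc]
    _ = sx (g * h) * j (cx g h + t + u) := by
        rw [hgh, ← hj_hom, mul_assoc, ← hj_hom, add_assoc]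

theorem proj_section_mul (hsx : ∀ g : G, p (sx g) = g)
    (hker : ∀ x : Gb, p x = 1 ↔ ∃ t : ℝ, j t = x) (g : G) (t : ℝ) :
    p (sx g * j t) = g := by
  rw [map_mul, hsx, (hker (j t)).mpr ⟨t, rfl⟩, mul_one]

theorem cochain_section_mul (hj_inj : Function.Injective j) (hsx : ∀ g : G, p (sx g) = g)
    (hker : ∀ x : Gb, p x = 1 ↔ ∃ t : ℝ, j t = x) (hφ : ∀ x : Gb, x = sx (p x) * j (φ x))
    (g : G) (t : ℝ) : φ (sx g * j t) = t := by
  have h := hφ (sx g * j t)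
  rw [proj_section_mul hsx hker] at h
  exact hj_inj (mul_left_cancel h.symm)

theorem cochain_mul (hj_hom : ∀ t u : ℝ, j (t + u) = j t * j u)
    (hj_inj : Function.Injective j) (hj_cent : ∀ t : ℝ, j t ∈ Subgroup.center Gb)
    (hker : ∀ x : Gb, p x = 1 ↔ ∃ t : ℝ, j t = x) (hsx : ∀ g : G, p (sx g) = g)
    (hφ : ∀ x : Gb, x = sx (p x) * j (φ x))
    (hcx : ∀ g h : G, j (cx g h) = sx g * sx h * (sx (g * h))⁻¹) (x y : Gb) :
    φ (x * y) = cx (p x) (p y) + φ x + φ y := by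
  conv_lhs => rw [hφ x, hφ y, section_mul_section hj_hom hj_cent hcx]
  exact cochain_section_mul hj_inj hsx hker hφ _ _

variable (j p sx φ) in
/-- The paper's `Ψ̄(α)`, for `ψ = Ψ(α)`. -/
def twistedLift (ψ : G ≃* G) (x : Gb) : Gb :=
  sx (ψ (p x)) * j (φ x)

theorem twistedLift_mul_twistedLift (hj_hom : ∀ t u : ℝ, j (t + u) = j t * j u)
    (hj_inj : Function.Injective j) (hj_cent : ∀ t : ℝ, j t ∈ Subgroup.center Gb)
    (hker : ∀ x : Gb, p x = 1 ↔ ∃ t : ℝ, j t = x) (hsx : ∀ g : G, p (sx g) = g)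
    (hφ : ∀ x : Gb, x = sx (p x) * j (φ x))
    (hcx : ∀ g h : G, j (cx g h) = sx g * sx h * (sx (g * h))⁻¹) (ψ : G ≃* G) (x y : Gb) :
    twistedLift j p sx φ ψ x * twistedLift j p sx φ ψ y =
      twistedLift j p sx φ ψ (x * y) * j (cx (ψ (p x)) (ψ (p y)) - cx (p x) (p y)) := by
  rw [twistedLift, twistedLift, twistedLift, section_mul_section hj_hom hj_cent hcx, map_mul,
    map_mul, mul_assoc, ← hj_hom, cochain_mul hj_hom hj_inj hj_cent hker hsx hφ hcx]
  congr 2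
  ring

theorem twistedLift_bijective (hj_inj : Function.Injective j)
    (hker : ∀ x : Gb, p x = 1 ↔ ∃ t : ℝ, j t = x) (hsx : ∀ g : G, p (sx g) = g)
    (hφ : ∀ x : Gb, x = sx (p x) * j (φ x)) (ψ : G ≃* G) :
    Function.Bijective (twistedLift j p sx φ ψ) := by
  refine Function.bijective_iff_has_inverse.mpr ⟨twistedLift j p sx φ ψ.symm, ?_, ?_⟩ <;>
  · intro x
    rw [twistedLift, twistedLift, proj_section_mul hsx hker,
      cochain_section_mul hj_inj hsx hker hφ]
    simp only [MulEquiv.symm_apply_apply, MulEquiv.apply_symm_apply, ← hφ]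

theorem twistedLift_map_mul_iff (hj_hom : ∀ t u : ℝ, j (t + u) = j t * j u)
    (hj_inj : Function.Injective j) (hj_cent : ∀ t : ℝ, j t ∈ Subgroup.center Gb)
    (hker : ∀ x : Gb, p x = 1 ↔ ∃ t : ℝ, j t = x) (hsx : ∀ g : G, p (sx g) = g)
    (hφ : ∀ x : Gb, x = sx (p x) * j (φ x))
    (hcx : ∀ g h : G, j (cx g h) = sx g * sx h * (sx (g * h))⁻¹) (ψ : G ≃* G) :
    (∀ x y : Gb, twistedLift j p sx φ ψ (x * y) =
        twistedLift j p sx φ ψ x * twistedLift j p sx φ ψ y) ↔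
      ∀ g h : G, cx (ψ g) (ψ h) = cx g h := by
  have defect := twistedLift_mul_twistedLift hj_hom hj_inj hj_cent hker hsx hφ hcx ψ
  constructor
  · intro hmul g h
    have hj : j (cx (ψ g) (ψ h) - cx g h) = j 0 := by
      have := defect (sx g) (sx h)
      rw [hmul, hsx, hsx, left_eq_mul] at this
      rw [this, map_zero_eq_one_of_map_add hj_hom]
    exact sub_eq_zero.mp (hj_inj hj)
  · intro hinv x y
    rw [defect, hinv, sub_self, map_zero_eq_one_of_map_add hj_hom, mul_one]

end CentralExtension

theorem stmt_14_general {G Gb P : Type*} [Group G] [Group Gb]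
    (j : ℝ → Gb) (p : Gb →* G)
    (hj_hom : ∀ t u : ℝ, j (t + u) = j t * j u)
    (hj_inj : Function.Injective j)
    (hj_cent : ∀ t : ℝ, j t ∈ Subgroup.center Gb)
    (hker : ∀ x : Gb, p x = 1 ↔ ∃ t : ℝ, j t = x)
    (sx : G → Gb) (hsx : ∀ g : G, p (sx g) = g)
    (φ : Gb → ℝ) (hφ : ∀ x : Gb, x = sx (p x) * j (φ x))
    (cx : G → G → ℝ) (hcx : ∀ g h : G, j (cx g h) = sx g * sx h * (sx (g * h))⁻¹)
    (Ψ : P → G ≃* G)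
    (Ψb : P → Gb → Gb) (hΨb : ∀ (α : P) (x : Gb), Ψb α x = sx (Ψ α (p x)) * j (φ x)) :
    ∀ α : P,
      (∀ x y : Gb, Ψb α x * Ψb α y =
        Ψb α (x * y) * j (cx (Ψ α (p x)) (Ψ α (p y)) - cx (p x) (p y))) ∧
      ((Function.Bijective (Ψb α) ∧ ∀ x y : Gb, Ψb α (x * y) = Ψb α x * Ψb α y) ↔
        (∀ g h : G, cx (Ψ α g) (Ψ α h) = cx g h)) := by
  intro α
  rw [show Ψb α = twistedLift j p sx φ (Ψ α) from funext (hΨb α)]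
  exact ⟨twistedLift_mul_twistedLift hj_hom hj_inj hj_cent hker hsx hφ hcx (Ψ α),
    and_iff_right (twistedLift_bijective hj_inj hker hsx hφ (Ψ α)) |>.trans
      (twistedLift_map_mul_iff hj_hom hj_inj hj_cent hker hsx hφ hcx (Ψ α))⟩

/-- the deviation of `Ψ̄(α)` from being multiplicative is measured by the
difference of `c_x` and its pullback by `Ψ(α)`; hence `Ψ̄(α)` is an automorphism of `Ḡ`
iff `c_x` is `Ψ(α)`-invariant. -/
theorem stmt_14 {G Gb P : Type*} [Group G] [Group Gb] [Group P]
    (j : ℝ → Gb) (p : Gb →* G)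
    (hj_hom : ∀ t u : ℝ, j (t + u) = j t * j u)
    (hj_inj : Function.Injective j)
    (hj_cent : ∀ t : ℝ, j t ∈ Subgroup.center Gb)
    (hp_surj : Function.Surjective p)
    (hker : ∀ x : Gb, p x = 1 ↔ ∃ t : ℝ, j t = x)
    (sx : G → Gb) (hsx : ∀ g : G, p (sx g) = g) (hsx1 : sx 1 = 1)
    (φ : Gb → ℝ) (hφ : ∀ x : Gb, x = sx (p x) * j (φ x))
    (hφ_hom : ∀ (x : Gb) (n : ℤ), φ (x ^ n) = n * φ x)
    (cx : G → G → ℝ) (hcx : ∀ g h : G, j (cx g h) = sx g * sx h * (sx (g * h))⁻¹)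
    (hcx_bdd : ∃ k : ℝ, ∀ g h : G, |cx g h| ≤ k)
    (Ψ : P → G ≃* G) (f : P → P → G)
    (hkernel : ∀ (α β : P) (g : G),
      Ψ α (Ψ β g) = f α β * Ψ (α * β) g * (f α β)⁻¹)
    (Ψb : P → Gb → Gb) (hΨb : ∀ (α : P) (x : Gb), Ψb α x = sx (Ψ α (p x)) * j (φ x)) :
    ∀ α : P,
      (∀ x y : Gb, Ψb α x * Ψb α y =
        Ψb α (x * y) * j (cx (Ψ α (p x)) (Ψ α (p y)) - cx (p x) (p y))) ∧
      ((Function.Bijective (Ψb α) ∧ ∀ x y : Gb, Ψb α (x * y) = Ψb α x * Ψb α y) ↔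
        (∀ g h : G, cx (Ψ α g) (Ψ α h) = cx g h)) :=
  stmt_14_general j p hj_hom hj_inj hj_cent hker sx hsx φ hφ cx hcx Ψ Ψb hΨb
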